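/- Let R be a commutative ring and let N0, N1, N2 be norms on finite matroids with values in R. For norms N, N' set T_{N,N'}(M) = Σ_{A⊆E(M)} N(M|A) · N'(M/A), and let N̄ denote the inverse norm defined by N̄(X) = (−1)^{|E(X)|} N(X). Then for every finite matroid M: T_{N̄0,N2}(M) = Σ_{A⊆E(M)} T_{N̄0,N1}(M|A) · T_{N̄1,N2}(M/A). -/
import Mathlib

open Finset

/-- A finite "pre-matroid": a finite ground set together with a rank function. -/
structure PreMatroid (α : Type*) where
  E : Finset α
  rk : Finset α → ℕ

namespace PreMatroid

variable {α : Type*} [DecidableEq α] {R : Type*} [CommRing R]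

/-- The matroid axioms: `rk X ≤ |X|`, monotonicity, and submodularity
(all on subsets of the ground set). -/
def IsMatroid (M : PreMatroid α) : Prop :=
  (∀ X, X ⊆ M.E → M.rk X ≤ X.card) ∧
  (∀ X Y, X ⊆ Y → Y ⊆ M.E → M.rk X ≤ M.rk Y) ∧
  (∀ X Y, X ⊆ M.E → Y ⊆ M.E → M.rk (X ∪ Y) + M.rk (X ∩ Y) ≤ M.rk X + M.rk Y)

/-- The restriction `M|A`: ground set `A`, rank function the restriction of `rk`. -/
def restrict (M : PreMatroid α) (A : Finset α) : PreMatroid α :=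
  ⟨A, M.rk⟩

/-- The contraction `M/A`: ground set `E ∖ A`, rank function `B ↦ rk (B ∪ A) − rk A`. -/
def contract (M : PreMatroid α) (A : Finset α) : PreMatroid α :=
  ⟨M.E \ A, fun B => M.rk (B ∪ A) - M.rk A⟩

/-- The deletion `M∖A ≔ M|(E∖A)`. -/
def delete (M : PreMatroid α) (A : Finset α) : PreMatroid α :=
  M.restrict (M.E \ A)

/-- The rank `rk(M) = rk(E(M))` of a matroid. -/
def rank (M : PreMatroid α) : ℕ := M.rk M.E

/-- The Tutte polynomial `𝔗_M(x,y) = Σ_{A ⊆ E} (x−1)^{rk(M)−rk(A)} (y−1)^{|A|−rk(A)}`,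
evaluated at elements of a commutative ring. -/
def tutte (M : PreMatroid α) (x y : R) : R :=
  ∑ A ∈ M.E.powerset, (x - 1) ^ (M.rank - M.rk A) * (y - 1) ^ (A.card - M.rk A)

end PreMatroid

namespace PreMatroid

/-- A norm on finite matroids with values in a commutative ring `R`:
it takes the value `1` on the empty matroid, and satisfies
`N(X) = N(X|A) · N(X/A)` for every finite matroid `X` and every `A ⊆ E(X)`. -/
def IsNorm {α : Type*} [DecidableEq α] {R : Type*} [CommRing R]
    (N : PreMatroid α → R) : Prop :=
  (∀ M : PreMatroid α, M.IsMatroid → M.E = ∅ → N M = 1) ∧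
  (∀ M : PreMatroid α, M.IsMatroid → ∀ A ⊆ M.E,
      N M = N (M.restrict A) * N (M.contract A))

/-- The Tutte character `T_{N,N'}(M) = Σ_{A⊆E} N(M|A) · N'(M/A)`. -/
def tutteChar {α : Type*} [DecidableEq α] {R : Type*} [CommRing R]
    (N N' : PreMatroid α → R) (M : PreMatroid α) : R :=
  ∑ A ∈ M.E.powerset, N (M.restrict A) * N' (M.contract A)

/-- The inverse norm `N̄(X) = (−1)^{|E(X)|} N(X)`. -/
def inverseNorm {α : Type*} {R : Type*} [CommRing R]
    (N : PreMatroid α → R) : PreMatroid α → R :=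
  fun X => (-1 : R) ^ X.E.card * N X

section Aux

variable {α : Type*} [DecidableEq α] {R : Type*} [CommRing R]

private lemma ext' {M N : PreMatroid α} (h1 : M.E = N.E) (h2 : M.rk = N.rk) : M = N := by
  cases M; cases N; simp_all

private lemma restrict_isMatroid' {M : PreMatroid α} (hM : M.IsMatroid) {A : Finset α}
    (hA : A ⊆ M.E) : (M.restrict A).IsMatroid := by
  obtain ⟨h1, h2, h3⟩ := hM
  exact ⟨fun X hX => h1 X (hX.trans hA),
         fun X Y hXY hY => h2 X Y hXY (hY.trans hA),
         fun X Y hX hY => h3 X Y (hX.trans hA) (hY.trans hA)⟩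

private lemma contract_isMatroid' {M : PreMatroid α} (hM : M.IsMatroid) {A : Finset α}
    (hA : A ⊆ M.E) : (M.contract A).IsMatroid := by
  obtain ⟨h1, h2, h3⟩ := hM
  refine ⟨?_, ?_, ?_⟩
  · intro X hX
    have hXE : X ⊆ M.E := hX.trans Finset.sdiff_subset
    have hs := h3 X A hXE hA
    have hc := h1 X hXE
    simp only [contract]
    omega
  · intro X Y hXY hY
    simp only [contract]
    have : M.rk (X ∪ A) ≤ M.rk (Y ∪ A) := h2 _ _ (Finset.union_subset_union_left hXY)
      (Finset.union_subset ((hY.trans Finset.sdiff_subset)) hA)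
    omega
  · intro X Y hX hY
    simp only [contract]
    have hXE : X ⊆ M.E := hX.trans Finset.sdiff_subset
    have hYE : Y ⊆ M.E := hY.trans Finset.sdiff_subset
    have hsub := h3 (X ∪ A) (Y ∪ A) (Finset.union_subset hXE hA) (Finset.union_subset hYE hA)
    have e1 : (X ∪ A) ∪ (Y ∪ A) = (X ∪ Y) ∪ A := by ext x; simp; tauto
    have e2 : (X ∪ A) ∩ (Y ∪ A) = (X ∩ Y) ∪ A := by ext x; simp; tauto
    rw [e1, e2] at hsub
    have m1 : M.rk A ≤ M.rk (X ∪ A) :=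
      h2 A _ Finset.subset_union_right (Finset.union_subset hXE hA)
    have m2 : M.rk A ≤ M.rk (Y ∪ A) :=
      h2 A _ Finset.subset_union_right (Finset.union_subset hYE hA)
    have m3 : M.rk A ≤ M.rk ((X ∩ Y) ∪ A) := h2 A _ Finset.subset_union_right
      (Finset.union_subset (Finset.inter_subset_left.trans hXE) hA)
    have m4 : M.rk A ≤ M.rk ((X ∪ Y) ∪ A) := h2 A _ Finset.subset_union_right
      (Finset.union_subset (Finset.union_subset hXE hYE) hA)
    omega

private lemma eq_c' {M : PreMatroid α} (hM : M.IsMatroid) {A B C : Finset α}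
    (hBA : B ⊆ A) (hAE : A ⊆ M.E) (hC : C ⊆ M.E \ A) :
    ((M.contract B).restrict ((A ∪ C) \ B)).contract (A \ B) = (M.contract A).restrict C := by
  have hba : M.rk B ≤ M.rk A := hM.2.1 B A hBA hAE
  apply ext'
  · show ((A ∪ C) \ B) \ (A \ B) = C
    ext x
    simp only [Finset.mem_sdiff, Finset.mem_union]
    constructor
    · rintro ⟨⟨hAC, hB⟩, hAB⟩; tauto
    · intro hxC
      have hxA : x ∉ A := (Finset.mem_sdiff.mp (hC hxC)).2
      exact ⟨⟨Or.inr hxC, fun hB => hxA (hBA hB)⟩, fun h => hxA h.1⟩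
  · funext B'
    show (M.rk ((B' ∪ (A \ B)) ∪ B) - M.rk B) - (M.rk ((A \ B) ∪ B) - M.rk B)
        = M.rk (B' ∪ A) - M.rk A
    have e1 : (A \ B) ∪ B = A := Finset.sdiff_union_of_subset hBA
    have e2 : (B' ∪ (A \ B)) ∪ B = B' ∪ A := by rw [Finset.union_assoc, e1]
    rw [e1, e2]
    omega

private lemma eq_d' {M : PreMatroid α} (hM : M.IsMatroid) {A C : Finset α}
    (hAE : A ⊆ M.E) (hC : C ⊆ M.E \ A) :
    (M.contract A).contract C = M.contract (A ∪ C) := by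
  have h : M.rk A ≤ M.rk (A ∪ C) := hM.2.1 A (A ∪ C) Finset.subset_union_left
    (Finset.union_subset hAE (hC.trans Finset.sdiff_subset))
  apply ext'
  · show (M.E \ A) \ C = M.E \ (A ∪ C)
    ext x; simp only [Finset.mem_sdiff, Finset.mem_union]; tauto
  · funext B'
    show (M.rk ((B' ∪ C) ∪ A) - M.rk A) - (M.rk (C ∪ A) - M.rk A)
        = M.rk (B' ∪ (A ∪ C)) - M.rk (A ∪ C)
    have e1 : C ∪ A = A ∪ C := Finset.union_comm _ _
    have e2 : (B' ∪ C) ∪ A = B' ∪ (A ∪ C) := by rw [Finset.union_assoc, e1]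
    rw [e1, e2]
    omega

private lemma sum_powerset_sdiff' (E : Finset α) (f : Finset α → Finset α → R) :
    ∑ A ∈ E.powerset, ∑ C ∈ (E \ A).powerset, f A C
      = ∑ D ∈ E.powerset, ∑ A ∈ D.powerset, f A (D \ A) := by
  rw [Finset.sum_sigma', Finset.sum_sigma']
  refine Finset.sum_bij' (fun p _ => ⟨p.1 ∪ p.2, p.1⟩) (fun p _ => ⟨p.2, p.1 \ p.2⟩)
    ?_ ?_ ?_ ?_ ?_
  · rintro ⟨A, C⟩ hp
    simp only [Finset.mem_sigma, Finset.mem_powerset] at hp ⊢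
    exact ⟨Finset.union_subset hp.1 (hp.2.trans Finset.sdiff_subset), Finset.subset_union_left⟩
  · rintro ⟨D, A⟩ hp
    simp only [Finset.mem_sigma, Finset.mem_powerset] at hp ⊢
    exact ⟨hp.2.trans hp.1, Finset.sdiff_subset_sdiff hp.1 le_rfl⟩
  · rintro ⟨A, C⟩ hp
    simp only [Finset.mem_sigma, Finset.mem_powerset] at hp
    have hd : Disjoint A C := Finset.disjoint_left.mpr
      (fun x hxA hxC => (Finset.mem_sdiff.mp (hp.2 hxC)).2 hxA)
    simp [Finset.union_sdiff_cancel_left hd]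
  · rintro ⟨D, A⟩ hp
    simp only [Finset.mem_sigma, Finset.mem_powerset] at hp
    simp [Finset.union_sdiff_of_subset hp.2]
  · rintro ⟨A, C⟩ hp
    simp only [Finset.mem_sigma, Finset.mem_powerset] at hp
    have hd : Disjoint A C := Finset.disjoint_left.mpr
      (fun x hxA hxC => (Finset.mem_sdiff.mp (hp.2 hxC)).2 hxA)
    simp [Finset.union_sdiff_cancel_left hd]

private lemma sum_neg_one_pow' (s : Finset α) :
    ∑ t ∈ s.powerset, (-1 : R) ^ t.card = if s = ∅ then 1 else 0 := by
  have h := Finset.sum_powerset_neg_one_pow_card (x := s)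
  have h2 := congrArg (Int.cast : ℤ → R) h
  push_cast at h2
  simpa using h2

private lemma sum_neg_one_pow_sub' (s : Finset α) :
    ∑ t ∈ s.powerset, (-1 : R) ^ (s.card - t.card) = if s = ∅ then 1 else 0 := by
  have key : ∀ t ∈ s.powerset, (-1 : R) ^ (s.card - t.card) = (-1) ^ s.card * (-1) ^ t.card := by
    intro t ht
    have hle : t.card ≤ s.card := Finset.card_le_card (Finset.mem_powerset.mp ht)
    have h1 : (-1 : R) ^ (s.card - t.card) * (-1) ^ t.card = (-1) ^ s.card := by
      rw [← pow_add, Nat.sub_add_cancel hle]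
    have h2 : ((-1 : R) ^ t.card) * ((-1) ^ t.card) = 1 := by
      rw [← mul_pow]; norm_num
    calc (-1 : R) ^ (s.card - t.card)
        = (-1 : R) ^ (s.card - t.card) * (((-1) ^ t.card) * ((-1) ^ t.card)) := by rw [h2, mul_one]
      _ = ((-1 : R) ^ (s.card - t.card) * (-1) ^ t.card) * (-1) ^ t.card := by ring
      _ = (-1) ^ s.card * (-1) ^ t.card := by rw [h1]
  rw [Finset.sum_congr rfl key, ← Finset.mul_sum, sum_neg_one_pow']
  split_ifs with h
  · subst h; simp
  · simp

end Aux

/-- The general convolution formula for Tutte characters: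
`T_{N̄0,N2}(M) = Σ_{A⊆E} T_{N̄0,N1}(M|A) · T_{N̄1,N2}(M/A)`. -/
theorem tutteChar_convolution {α : Type*} [DecidableEq α] {R : Type*} [CommRing R]
    (N0 N1 N2 : PreMatroid α → R) (hN0 : IsNorm N0) (hN1 : IsNorm N1) (hN2 : IsNorm N2)
    (M : PreMatroid α) (hM : M.IsMatroid) :
    tutteChar (inverseNorm N0) N2 M =
      ∑ A ∈ M.E.powerset,
        tutteChar (inverseNorm N0) N1 (M.restrict A) *
          tutteChar (inverseNorm N1) N2 (M.contract A) := by
  classical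
  set G : Finset α → Finset α → R := fun B D =>
    (-1 : R) ^ B.card * N0 (M.restrict B) * N1 ((M.contract B).restrict (D \ B))
      * N2 (M.contract D) with hG
  have step1 : ∀ A ∈ M.E.powerset,
      tutteChar (inverseNorm N0) N1 (M.restrict A) *
        tutteChar (inverseNorm N1) N2 (M.contract A)
      = ∑ C ∈ (M.E \ A).powerset, ∑ B ∈ A.powerset, (-1 : R) ^ C.card * G B (A ∪ C) := by
    intro A hA
    rw [Finset.mem_powerset] at hA
    unfold tutteChar
    rw [Finset.sum_mul_sum, Finset.sum_comm]
    refine Finset.sum_congr rfl fun C hC => Finset.sum_congr rfl fun B hB => ?_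
    rw [Finset.mem_powerset] at hC hB
    -- hC : C ⊆ (M.contract A).E = M.E \ A ; hB : B ⊆ A
    have hC' : C ⊆ M.E \ A := hC
    have hB' : B ⊆ A := hB
    -- combine the two N1 values
    set W : PreMatroid α := (M.contract B).restrict ((A ∪ C) \ B) with hW
    have hBE : B ⊆ M.E := hB'.trans hA
    have hWsub : (A ∪ C) \ B ⊆ (M.contract B).E :=
      Finset.sdiff_subset_sdiff
        (Finset.union_subset hA (hC'.trans Finset.sdiff_subset)) le_rfl
    have hWm : W.IsMatroid := restrict_isMatroid' (contract_isMatroid' hM hBE) hWsub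
    have hABW : A \ B ⊆ W.E :=
      Finset.sdiff_subset_sdiff Finset.subset_union_left le_rfl
    have hsplit := hN1.2 W hWm (A \ B) hABW
    have e_restr : W.restrict (A \ B) = (M.restrict A).contract B := rfl
    have e_contr : W.contract (A \ B) = (M.contract A).restrict C := eq_c' hM hB' hA hC'
    rw [e_restr, e_contr] at hsplit
    have e_d : (M.contract A).contract C = M.contract (A ∪ C) := eq_d' hM hA hC'
    show inverseNorm N0 ((M.restrict A).restrict B) * N1 ((M.restrict A).contract B) *
        (inverseNorm N1 ((M.contract A).restrict C) * N2 ((M.contract A).contract C))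
        = (-1 : R) ^ C.card * G B (A ∪ C)
    rw [e_d, hG]
    show (-1 : R) ^ B.card * N0 ((M.restrict A).restrict B) * N1 ((M.restrict A).contract B) *
        ((-1 : R) ^ C.card * N1 ((M.contract A).restrict C) * N2 (M.contract (A ∪ C)))
        = _
    have : (M.restrict A).restrict B = M.restrict B := rfl
    rw [this]
    have hprod : N1 ((M.restrict A).contract B) * N1 ((M.contract A).restrict C)
        = N1 ((M.contract B).restrict ((A ∪ C) \ B)) := by rw [← hsplit]
    calc (-1 : R) ^ B.card * N0 (M.restrict B) * N1 ((M.restrict A).contract B) *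
          ((-1 : R) ^ C.card * N1 ((M.contract A).restrict C) * N2 (M.contract (A ∪ C)))
        = (-1 : R) ^ C.card * ((-1 : R) ^ B.card * N0 (M.restrict B) *
            (N1 ((M.restrict A).contract B) * N1 ((M.contract A).restrict C))
            * N2 (M.contract (A ∪ C))) := by ring
      _ = _ := by rw [hprod]
  rw [Finset.sum_congr rfl step1, sum_powerset_sdiff']
  have step2 : ∀ D ∈ M.E.powerset,
      (∑ A ∈ D.powerset, ∑ B ∈ A.powerset, (-1 : R) ^ (D \ A).card * G B (A ∪ (D \ A)))
      = (-1 : R) ^ D.card * N0 (M.restrict D) * N2 (M.contract D) := by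
    intro D hD
    rw [Finset.mem_powerset] at hD
    have e1 : ∀ A ∈ D.powerset, ∀ B ∈ A.powerset,
        (-1 : R) ^ (D \ A).card * G B (A ∪ (D \ A)) = (-1 : R) ^ (D \ A).card * G B D := by
      intro A hA B _
      rw [Finset.union_sdiff_of_subset (Finset.mem_powerset.mp hA)]
    rw [Finset.sum_congr rfl fun A hA => Finset.sum_congr rfl (e1 A hA)]
    -- reindex (A, B⊆A) ↦ (B, C⊆D\B)
    have e2 : (∑ B ∈ D.powerset, ∑ C ∈ (D \ B).powerset,
          (-1 : R) ^ (D \ (B ∪ C)).card * G B D)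
        = ∑ A ∈ D.powerset, ∑ B ∈ A.powerset, (-1 : R) ^ (D \ A).card * G B D := by
      rw [sum_powerset_sdiff' D (fun B C => (-1 : R) ^ (D \ (B ∪ C)).card * G B D)]
      refine Finset.sum_congr rfl fun A hA => Finset.sum_congr rfl fun B hB => ?_
      rw [Finset.union_sdiff_of_subset (Finset.mem_powerset.mp hB)]
    rw [← e2]
    have e3 : ∀ B ∈ D.powerset,
        (∑ C ∈ (D \ B).powerset, (-1 : R) ^ (D \ (B ∪ C)).card * G B D)
        = (if D \ B = ∅ then 1 else 0) * G B D := by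
      intro B hB
      rw [Finset.mem_powerset] at hB
      rw [← Finset.sum_mul, ← sum_neg_one_pow_sub' (R := R) (D \ B)]
      congr 1
      refine Finset.sum_congr rfl fun C hC => ?_
      rw [Finset.mem_powerset] at hC
      congr 1
      have : D \ (B ∪ C) = (D \ B) \ C := by
        ext x; simp only [Finset.mem_sdiff, Finset.mem_union]; tauto
      rw [this, Finset.card_sdiff_of_subset hC]
    rw [Finset.sum_congr rfl e3]
    have e4 : ∀ B ∈ D.powerset,
        (if D \ B = ∅ then 1 else 0) * G B D = if B = D then G B D else 0 := by
      intro B hB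
      rw [Finset.mem_powerset] at hB
      have : D \ B = ∅ ↔ B = D := by
        rw [Finset.sdiff_eq_empty_iff_subset]
        exact ⟨fun h => Finset.Subset.antisymm hB h, fun h => h ▸ le_rfl⟩
      simp only [this]
      split_ifs <;> ring
    rw [Finset.sum_congr rfl e4, Finset.sum_ite_eq' D.powerset D (fun B => G B D),
      if_pos (Finset.mem_powerset.mpr (le_refl D))]
    -- G D D
    have hDD : D \ D = ∅ := Finset.sdiff_self D
    have hNempty : N1 ((M.contract D).restrict (D \ D)) = 1 := by
      apply hN1.1
      · exact restrict_isMatroid' (contract_isMatroid' hM hD)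
          (hDD ▸ Finset.empty_subset _)
      · exact hDD
    rw [hG]
    show (-1 : R) ^ D.card * N0 (M.restrict D) * N1 ((M.contract D).restrict (D \ D))
        * N2 (M.contract D) = _
    rw [hNempty, mul_one]
  rw [Finset.sum_congr rfl step2]
  unfold tutteChar inverseNorm
  rfl
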